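/- arXiv:2111.06576 — 2 statements merged into one kernel-verified Lean document; each statement's English description precedes it below -/
import Mathlib

section
/- Let A be an associative unital algebra over a field K, p ≥ 3 odd, q ∈ K a primitive p-th root of unity. Suppose e, k ∈ A with k invertible and k·e = q²·e·k. Then in the algebra A ⊗ A one has (e⊗1 + k⊗e)^p = e^p⊗1 + k^p⊗e^p. -/
/-!
With `x = e ⊗ 1` and `y = k ⊗ e` one has `y x = q² x y`, and `q²` is again a primitive `p`-th
root of unity because `p` is odd. For `r`-commuting `x, y` the `q`-binomial theorem expands
`(x + y)^n` with Gaussian binomial coefficients, and the identity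
`(r^(b+1) - 1) [a+b+1, a]_r = (r^(a+1) - 1) [a+b+1, a+1]_r` forces all coefficients other than
the two extreme ones to vanish when `r` is a primitive `n`-th root of unity.
-/

open scoped TensorProduct
open Finset

/-- `qBinomial r a b` is the Gaussian binomial `[a+b, a]_r`, the coefficient of `x^a y^b` in
`(x + y)^(a+b)` when `y x = r x y`. -/
def qBinomial {R : Type*} [CommSemiring R] (r : R) : ℕ → ℕ → R
  | 0, _ => 1
  | _ + 1, 0 => 1
  | a + 1, b + 1 => qBinomial r a (b + 1) + r ^ (a + 1) * qBinomial r (a + 1) b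

section CommSemiring

variable {R : Type*} [CommSemiring R] (r : R)

@[simp] lemma qBinomial_zero_left (b : ℕ) : qBinomial r 0 b = 1 := by
  rw [qBinomial]

@[simp] lemma qBinomial_zero_right (a : ℕ) : qBinomial r a 0 = 1 := by
  cases a <;> rw [qBinomial]

lemma qBinomial_succ_succ (a b : ℕ) :
    qBinomial r (a + 1) (b + 1) = qBinomial r a (b + 1) + r ^ (a + 1) * qBinomial r (a + 1) b := by
  rw [qBinomial]

lemma sum_antidiagonal_qBinomial_succ_smul {M : Type*} [AddCommMonoid M] [Module R M]
    (f : ℕ → ℕ → M) (n : ℕ) :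
    ∑ ij ∈ antidiagonal (n + 1), qBinomial r ij.1 ij.2 • f ij.1 ij.2 =
      ∑ ij ∈ antidiagonal n, qBinomial r ij.1 ij.2 • f (ij.1 + 1) ij.2 +
        ∑ ij ∈ antidiagonal n, (r ^ ij.1 * qBinomial r ij.1 ij.2) • f ij.1 (ij.2 + 1) := by
  cases n with
  | zero => simp [Nat.sum_antidiagonal_succ, add_comm]
  | succ m =>
    rw [Nat.sum_antidiagonal_succ, Nat.sum_antidiagonal_succ', Nat.sum_antidiagonal_succ',
      Nat.sum_antidiagonal_succ]
    simp only [qBinomial_succ_succ, add_smul, sum_add_distrib, qBinomial_zero_left,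
      qBinomial_zero_right, pow_zero, mul_one]
    abel

variable {A : Type*} [Semiring A] [Algebra R A] {r} {x y : A}

lemma mul_pow_eq_smul_pow_mul (h : y * x = r • (x * y)) (a : ℕ) :
    y * x ^ a = r ^ a • (x ^ a * y) := by
  induction a with
  | zero => simp
  | succ a ih =>
    calc y * x ^ (a + 1) = (y * x) * x ^ a := by rw [pow_succ', mul_assoc]
      _ = r • (x * (y * x ^ a)) := by rw [h, smul_mul_assoc, mul_assoc]
      _ = r ^ (a + 1) • (x ^ (a + 1) * y) := by
        rw [ih, mul_smul_comm, smul_smul, ← mul_assoc, ← pow_succ', ← pow_succ']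

theorem add_pow_eq_sum_qBinomial (h : y * x = r • (x * y)) (n : ℕ) :
    (x + y) ^ n = ∑ ij ∈ antidiagonal n, qBinomial r ij.1 ij.2 • (x ^ ij.1 * y ^ ij.2) := by
  induction n with
  | zero => simp
  | succ n ih =>
    have hterm : ∀ a b : ℕ, (x + y) * (x ^ a * y ^ b) =
        x ^ (a + 1) * y ^ b + r ^ a • (x ^ a * y ^ (b + 1)) := by
      intro a b
      rw [add_mul, ← mul_assoc, ← pow_succ', ← mul_assoc, mul_pow_eq_smul_pow_mul h,
        smul_mul_assoc, mul_assoc, ← pow_succ']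
    rw [pow_succ', ih, mul_sum, sum_antidiagonal_qBinomial_succ_smul r (fun a b => x ^ a * y ^ b),
      ← sum_add_distrib]
    refine sum_congr rfl fun ij _ => ?_
    rw [mul_smul_comm, hterm, smul_add, smul_smul, mul_comm]

end CommSemiring

section CommRing

variable {R : Type*} [CommRing R] (r : R)

lemma pow_succ_sub_one_mul_qBinomial (a b : ℕ) :
    (r ^ (b + 1) - 1) * qBinomial r a (b + 1) = (r ^ (a + 1) - 1) * qBinomial r (a + 1) b := by
  induction a generalizing b with
  | zero =>
    induction b with
    | zero => simp
    | succ b ih =>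
      rw [qBinomial_succ_succ]
      simp only [qBinomial_zero_left, zero_add, pow_one] at ih ⊢
      linear_combination r * ih
  | succ a iha =>
    induction b with
    | zero =>
      have h0 := iha 0
      rw [qBinomial_succ_succ]
      simp only [qBinomial_zero_right] at h0 ⊢
      linear_combination h0
    | succ b ihb =>
      rw [qBinomial_succ_succ, qBinomial_succ_succ r (a + 1) b]
      linear_combination iha (b + 1) + r ^ (a + 2) * ihb

variable {r} [IsDomain R] {n : ℕ}

lemma qBinomial_eq_zero_of_isPrimitiveRoot (hr : IsPrimitiveRoot r n) {a b : ℕ} (ha : 0 < a)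
    (hab : a + (b + 1) = n) : qBinomial r a (b + 1) = 0 := by
  induction b generalizing a with
  | zero =>
    have hcross := pow_succ_sub_one_mul_qBinomial r a 0
    rw [show a + 1 = n by omega, hr.pow_eq_one, sub_self, zero_mul] at hcross
    exact (mul_eq_zero.mp hcross).resolve_left
      (sub_ne_zero.mpr (hr.pow_ne_one_of_pos_of_lt one_ne_zero (by omega)))
  | succ b ih =>
    have hcross := pow_succ_sub_one_mul_qBinomial r a (b + 1)
    rw [ih (a := a + 1) (by omega) (by omega), mul_zero] at hcross
    exact (mul_eq_zero.mp hcross).resolve_left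
      (sub_ne_zero.mpr (hr.pow_ne_one_of_pos_of_lt (by omega) (by omega)))

theorem add_pow_eq_add_pow_of_isPrimitiveRoot {A : Type*} [Semiring A] [Algebra R A] {x y : A}
    (hr : IsPrimitiveRoot r n) (hn : n ≠ 0) (h : y * x = r • (x * y)) :
    (x + y) ^ n = x ^ n + y ^ n := by
  rw [add_pow_eq_sum_qBinomial h, sum_eq_add_of_mem (n, 0) (0, n) (by simp) (by simp)
    (by simp [hn])]
  · simp
  · rintro ⟨a, _ | b⟩ hab ⟨hn0, h0n⟩
    · simp_all
    · rw [HasAntidiagonal.mem_antidiagonal] at hab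
      have ha : 0 < a := Nat.pos_of_ne_zero fun ha => h0n (by simp [ha]; omega)
      rw [qBinomial_eq_zero_of_isPrimitiveRoot hr ha hab, zero_smul]

end CommRing

theorem coproduct_pth_power_general {K : Type*} [Field K] {A : Type*} [Ring A] [Algebra K A]
    (p : ℕ) (hpodd : Odd p) (q : K) (hq : IsPrimitiveRoot q p)
    (e k : A) (hcomm : k * e = (q ^ 2) • (e * k)) :
    ((e ⊗ₜ[K] (1 : A)) + (k ⊗ₜ[K] e)) ^ p
      = ((e ^ p) ⊗ₜ[K] (1 : A)) + ((k ^ p) ⊗ₜ[K] (e ^ p)) := by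
  have hq2 : IsPrimitiveRoot (q ^ 2) p := hq.pow_of_coprime 2 hpodd.coprime_two_left
  have hqcomm :
      (k ⊗ₜ[K] e) * (e ⊗ₜ[K] (1 : A)) = (q ^ 2) • ((e ⊗ₜ[K] (1 : A)) * (k ⊗ₜ[K] e)) := by
    simp only [Algebra.TensorProduct.tmul_mul_tmul, mul_one, one_mul, hcomm,
      TensorProduct.smul_tmul']
  rw [add_pow_eq_add_pow_of_isPrimitiveRoot hq2 hpodd.pos.ne' hqcomm,
    Algebra.TensorProduct.tmul_pow, Algebra.TensorProduct.tmul_pow, one_pow]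

/-- In `A ⊗ A`, `(e⊗1 + k⊗e)^p = e^p⊗1 + k^p⊗e^p` when `k·e = q²·e·k` with `q` a
primitive `p`-th root of unity, `p ≥ 3` odd. -/
theorem coproduct_pth_power {K : Type*} [Field K] {A : Type*} [Ring A] [Algebra K A]
    (p : ℕ) (hp3 : 3 ≤ p) (hpodd : Odd p) (q : K) (hq : IsPrimitiveRoot q p)
    (e k : A) (hk : IsUnit k) (hcomm : k * e = (q ^ 2) • (e * k)) :
    ((e ⊗ₜ[K] (1 : A)) + (k ⊗ₜ[K] e)) ^ p
      = ((e ^ p) ⊗ₜ[K] (1 : A)) + ((k ^ p) ⊗ₜ[K] (e ^ p)) :=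
  coproduct_pth_power_general p hpodd q hq e k hcomm
end

section
/- Let H be a Hopf algebra over a field K with multiplication μ, comultiplication Δ, counit ε, and antipode S, and let J ∈ H ⊗ H be a Drinfeld twist (an invertible element satisfying (Δ⊗id)(J)(J⊗1) = (id⊗Δ)(J)(1⊗J) and (ε⊗id)(J) = (id⊗ε)(J) = 1). Set U = μ ∘ (S ⊗ id)(J) and V = μ ∘ (id ⊗ S)(J⁻¹). Then U·V = 1 = V·U, i.e. U is invertible with inverse V. -/
/-!
Write `Φ(x) = μ(S ⊗ id)(x)` and `Ψ(x) = μ(id ⊗ S)(x)`, so that `U = Φ(J)` and `V = Ψ(J⁻¹)`.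
Since `S` is antimultiplicative and convolution-inverse to the identity, the map
`x ⊗ y ⊗ z ↦ S(x) y S(z)` sends `(J ⊗ 1)(1 ⊗ J⁻¹)` to `Φ(J) Ψ(J⁻¹)` and sends
`(Δ ⊗ id)(J⁻¹) (id ⊗ Δ)(J)` to `S((ε ⊗ id)(J⁻¹) (id ⊗ ε)(J)) = 1`. The cocycle identity says
exactly that these two elements of `H ⊗ H ⊗ H` agree, hence `UV = 1`. Symmetrically,
`x ⊗ y ⊗ z ↦ x S(y) z` gives `VU = 1`.
-/

open scoped TensorProduct
open Coalgebra HopfAlgebra TensorProduct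

lemma mul_eq_mul_of_mul_eq_mul {M : Type*} [Monoid M] {a b l r a' r' : M}
    (h : a * l = b * r) (ha : a' * a = 1) (hr : r * r' = 1) : l * r' = a' * b :=
  calc l * r' = a' * (a * l) * r' := by rw [← mul_assoc, ha, one_mul]
    _ = a' * b := by rw [h, mul_assoc, mul_assoc, hr, mul_one]

namespace Bialgebra

-- The maps of the cocycle and counit conditions, packaged as algebra homs so that they are
-- visibly multiplicative; applied to `J` they are definitionally the linear maps used there.

variable (R H : Type*) [CommSemiring R] [Semiring H] [Bialgebra R H]

noncomputable def comulRTensor : H ⊗[R] H →ₐ[R] H ⊗[R] (H ⊗[R] H) :=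
  (Algebra.TensorProduct.assoc R R R H H H).toAlgHom.comp
    (Algebra.TensorProduct.map (comulAlgHom R H) (AlgHom.id R H))

noncomputable def comulLTensor : H ⊗[R] H →ₐ[R] H ⊗[R] (H ⊗[R] H) :=
  Algebra.TensorProduct.map (AlgHom.id R H) (comulAlgHom R H)

noncomputable def counitRTensor : H ⊗[R] H →ₐ[R] H :=
  (Algebra.TensorProduct.lid R H).toAlgHom.comp
    (Algebra.TensorProduct.map (counitAlgHom R H) (AlgHom.id R H))

noncomputable def counitLTensor : H ⊗[R] H →ₐ[R] H :=
  (Algebra.TensorProduct.rid R R H).toAlgHom.comp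
    (Algebra.TensorProduct.map (AlgHom.id R H) (counitAlgHom R H))

noncomputable def includeLeftAssoc : H ⊗[R] H →ₐ[R] H ⊗[R] (H ⊗[R] H) :=
  (Algebra.TensorProduct.assoc R R R H H H).toAlgHom.comp Algebra.TensorProduct.includeLeft

variable {R H}

@[simp] lemma comulRTensor_tmul (a b : H) :
    comulRTensor R H (a ⊗ₜ b) = _root_.TensorProduct.assoc R H H H (comul a ⊗ₜ b) := rfl

@[simp] lemma comulLTensor_tmul (a b : H) : comulLTensor R H (a ⊗ₜ b) = a ⊗ₜ comul b := rfl

@[simp] lemma counitRTensor_tmul (a b : H) :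
    counitRTensor R H (a ⊗ₜ b) = counit (R := R) a • b := rfl

@[simp] lemma counitLTensor_tmul (a b : H) :
    counitLTensor R H (a ⊗ₜ b) = counit (R := R) b • a := rfl

@[simp] lemma includeLeftAssoc_apply (x : H ⊗[R] H) :
    includeLeftAssoc R H x = _root_.TensorProduct.assoc R H H H (x ⊗ₜ 1) := rfl

end Bialgebra

namespace HopfAlgebra

open Bialgebra

variable (R H : Type*) [CommSemiring R] [Semiring H] [HopfAlgebra R H]

noncomputable def antipodeMulMulAntipode : H ⊗[R] (H ⊗[R] H) →ₗ[R] H :=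
  LinearMap.mul' R H ∘ₗ map (antipode R) LinearMap.id ∘ₗ
    map LinearMap.id (LinearMap.mul' R H ∘ₗ map LinearMap.id (antipode R))

noncomputable def mulAntipodeMul : H ⊗[R] (H ⊗[R] H) →ₗ[R] H :=
  LinearMap.mul' R H ∘ₗ map LinearMap.id (LinearMap.mul' R H ∘ₗ map (antipode R) LinearMap.id)

variable {R H}

@[simp] lemma antipodeMulMulAntipode_tmul (x y z : H) :
    antipodeMulMulAntipode R H (x ⊗ₜ (y ⊗ₜ z)) = antipode R x * (y * antipode R z) := by
  simp [antipodeMulMulAntipode]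

@[simp] lemma mulAntipodeMul_tmul (x y z : H) :
    mulAntipodeMul R H (x ⊗ₜ (y ⊗ₜ z)) = x * (antipode R y * z) := by
  simp [mulAntipodeMul]

lemma antipodeMulMulAntipode_assoc_tmul_mul_tmul (t s : H ⊗[R] H) (b c : H) :
    antipodeMulMulAntipode R H (TensorProduct.assoc R H H H (t ⊗ₜ b) * (c ⊗ₜ s)) =
      antipode R c * LinearMap.mul' R H (map (antipode R) LinearMap.id t) *
        LinearMap.mul' R H (map LinearMap.id (antipode R) s) * antipode R b := by
  induction t using TensorProduct.induction_on with
  | zero => simp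
  | add t₁ t₂ h₁ h₂ => simp only [add_tmul, map_add, add_mul, mul_add, h₁, h₂]
  | tmul p q =>
    induction s using TensorProduct.induction_on with
    | zero => simp
    | add s₁ s₂ h₁ h₂ => simp only [tmul_add, map_add, mul_add, add_mul, h₁, h₂]
    | tmul u v => simp [antipode_mul_antidistrib, mul_assoc]

lemma mulAntipodeMul_tmul_mul_assoc_tmul (t s : H ⊗[R] H) (a d : H) :
    mulAntipodeMul R H ((a ⊗ₜ s) * TensorProduct.assoc R H H H (t ⊗ₜ d)) =
      a * LinearMap.mul' R H (map LinearMap.id (antipode R) t) *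
        LinearMap.mul' R H (map (antipode R) LinearMap.id s) * d := by
  induction t using TensorProduct.induction_on with
  | zero => simp
  | add t₁ t₂ h₁ h₂ => simp only [add_tmul, map_add, add_mul, mul_add, h₁, h₂]
  | tmul p q =>
    induction s using TensorProduct.induction_on with
    | zero => simp
    | add s₁ s₂ h₁ h₂ => simp only [tmul_add, map_add, mul_add, add_mul, h₁, h₂]
    | tmul u v => simp [antipode_mul_antidistrib, mul_assoc]

lemma antipodeMulMulAntipode_includeLeftAssoc_mul_includeRight (x y : H ⊗[R] H) :
    antipodeMulMulAntipode R H (includeLeftAssoc R H x * Algebra.TensorProduct.includeRight y) =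
      LinearMap.mul' R H (map (antipode R) LinearMap.id x) *
        LinearMap.mul' R H (map LinearMap.id (antipode R) y) := by
  simpa using antipodeMulMulAntipode_assoc_tmul_mul_tmul x y 1 1

lemma mulAntipodeMul_includeRight_mul_includeLeftAssoc (x y : H ⊗[R] H) :
    mulAntipodeMul R H (Algebra.TensorProduct.includeRight y * includeLeftAssoc R H x) =
      LinearMap.mul' R H (map LinearMap.id (antipode R) x) *
        LinearMap.mul' R H (map (antipode R) LinearMap.id y) := by
  simpa using mulAntipodeMul_tmul_mul_assoc_tmul x y 1 1

lemma antipodeMulMulAntipode_comulRTensor_mul_comulLTensor (x y : H ⊗[R] H) :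
    antipodeMulMulAntipode R H (comulRTensor R H x * comulLTensor R H y) =
      antipode R (counitRTensor R H x * counitLTensor R H y) := by
  induction x using TensorProduct.induction_on with
  | zero => simp
  | add x₁ x₂ h₁ h₂ => simp only [map_add, add_mul, h₁, h₂]
  | tmul a b =>
    induction y using TensorProduct.induction_on with
    | zero => simp
    | add y₁ y₂ h₁ h₂ => simp only [map_add, mul_add, h₁, h₂]
    | tmul c d =>
      rw [comulRTensor_tmul, comulLTensor_tmul, antipodeMulMulAntipode_assoc_tmul_mul_tmul,
        ← LinearMap.rTensor_def, ← LinearMap.lTensor_def, mul_antipode_rTensor_comul_apply,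
        mul_antipode_lTensor_comul_apply]
      simp only [mul_assoc, ← Algebra.smul_def, mul_smul_comm, counitRTensor_tmul,
        counitLTensor_tmul, smul_mul_assoc, map_smul, antipode_mul_antidistrib]
      exact smul_comm _ _ _

lemma mulAntipodeMul_comulLTensor_mul_comulRTensor (x y : H ⊗[R] H) :
    mulAntipodeMul R H (comulLTensor R H x * comulRTensor R H y) =
      counitLTensor R H x * counitRTensor R H y := by
  induction x using TensorProduct.induction_on with
  | zero => simp
  | add x₁ x₂ h₁ h₂ => simp only [map_add, add_mul, h₁, h₂]
  | tmul a b =>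
    induction y using TensorProduct.induction_on with
    | zero => simp
    | add y₁ y₂ h₁ h₂ => simp only [map_add, mul_add, h₁, h₂]
    | tmul c d =>
      rw [comulRTensor_tmul, comulLTensor_tmul, mulAntipodeMul_tmul_mul_assoc_tmul,
        ← LinearMap.rTensor_def, ← LinearMap.lTensor_def, mul_antipode_rTensor_comul_apply,
        mul_antipode_lTensor_comul_apply]
      simp only [mul_assoc, ← Algebra.smul_def, mul_smul_comm, counitRTensor_tmul,
        counitLTensor_tmul, smul_mul_assoc]

end HopfAlgebra

open Bialgebra in
/-- For a Drinfeld twist `J` with inverse `J'`, the element `U = μ∘(S⊗id)(J)` is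
invertible with inverse `V = μ∘(id⊗S)(J⁻¹)`. -/
theorem twist_element_invertible {K H : Type*} [CommRing K] [Ring H]
    [HopfAlgebra K H] (J J' : H ⊗[K] H) (hJJ' : J * J' = 1) (hJ'J : J' * J = 1)
    (hcocycle :
      (TensorProduct.assoc K H H H)
          ((TensorProduct.map comul LinearMap.id) J * (J ⊗ₜ[K] (1 : H)))
        = (TensorProduct.map LinearMap.id comul) J * ((1 : H) ⊗ₜ[K] J))
    (hnorm₁ : (TensorProduct.lid K H) ((TensorProduct.map counit LinearMap.id) J) = 1)
    (hnorm₂ : (TensorProduct.rid K H) ((TensorProduct.map LinearMap.id counit) J) = 1)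
    (U V : H)
    (hU : U = LinearMap.mul' K H ((TensorProduct.map (antipode K) LinearMap.id) J))
    (hV : V = LinearMap.mul' K H ((TensorProduct.map LinearMap.id (antipode K)) J')) :
    U * V = 1 ∧ V * U = 1 := by
  have hco : comulRTensor K H J * includeLeftAssoc K H J =
      comulLTensor K H J * Algebra.TensorProduct.includeRight J :=
    (map_mul (Algebra.TensorProduct.assoc K K K H H H) _ _).symm.trans hcocycle
  have hεJ : counitRTensor K H J = 1 ∧ counitLTensor K H J = 1 := ⟨hnorm₁, hnorm₂⟩
  have hεJ' : counitRTensor K H J' = 1 ∧ counitLTensor K H J' = 1 := by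
    constructor
    · simpa [hεJ.1] using map_mul_eq_one (counitRTensor K H) hJ'J
    · simpa [hεJ.2] using map_mul_eq_one (counitLTensor K H) hJ'J
  constructor
  · rw [hU, hV, ← antipodeMulMulAntipode_includeLeftAssoc_mul_includeRight,
      mul_eq_mul_of_mul_eq_mul hco (map_mul_eq_one (comulRTensor K H) hJ'J)
        (map_mul_eq_one Algebra.TensorProduct.includeRight hJJ'),
      antipodeMulMulAntipode_comulRTensor_mul_comulLTensor, hεJ'.1, hεJ.2, one_mul, antipode_one]
  · rw [hU, hV, ← mulAntipodeMul_includeRight_mul_includeLeftAssoc,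
      mul_eq_mul_of_mul_eq_mul hco.symm (map_mul_eq_one (comulLTensor K H) hJ'J)
        (map_mul_eq_one (includeLeftAssoc K H) hJJ'),
      mulAntipodeMul_comulLTensor_mul_comulRTensor, hεJ'.2, hεJ.1, one_mul]
end
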